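/- arXiv:math/0503392 — 2 statements merged into one kernel-verified Lean document; each statement's English description precedes it below -/
import Mathlib

section
/- Let (alpha_n)_{n\ge 0} be a real sequence and (a_n)_{n\ge 1}, (b_n)_{n\ge 1} real sequences that are (*)-related. Suppose limsup_{n\to\infty} |alpha_n|^{1/n} = R_1^{-1} < 1 and limsup_{n\to\infty} (|a_n^2-1|+|b_n|)^{1/(2n)} = R_2^{-1} < 1. Then R_1 = R_2. -/
open Filter Topology

/-!
Interlace the coefficients as `d = (b₁, a₁² - 1, b₂, a₂² - 1, …)`. Both (*)-relations then take
the single form `α_j - α_{j+2} = d_j + q_j` with `|q_j| ≤ 5 max(|α_j|, |α_{j+1}|, |α_{j+2}|)²`.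

If `|α_j| ≤ t^j` eventually, this gives `|d_j| = O(t^j)`, hence `R₂⁻¹ ≤ R₁⁻¹`. Conversely, if
`R₂⁻¹ < R₁⁻¹`, pick `s, t` with `R₂⁻¹ < s`, `R₁⁻¹ < t` and `max(s, t²) < R₁⁻¹`. Then
`α_j - α_{j+2} = O(max(s, t²)^j)`, and since `α_j → 0`, telescoping gives
`α_j = O(max(s, t²)^j)`, contradicting the definition of `R₁`.
-/

section RootGrowth

variable {f : ℕ → ℝ} {c : ℕ}

lemma eventually_mul_pow_le_pow {m m' : ℝ} (hm : 0 ≤ m) (hmm' : m < m') (C : ℝ) :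
    ∀ᶠ k in atTop, C * m ^ k ≤ m' ^ k := by
  filter_upwards [((isLittleO_pow_pow_of_lt_left hm hmm').const_mul_left C).bound one_pos]
    with k hk
  rw [one_mul, Real.norm_of_nonneg (pow_nonneg (hm.trans hmm'.le) k)] at hk
  exact (le_abs_self _).trans hk

lemma eventually_le_pow_of_limsup_rpow_lt (hf : ∀ n, 0 ≤ f n) (hc : c ≠ 0) {t : ℝ}
    (h₀ : limsup (fun n => f n ^ (1 / ((c : ℝ) * n))) atTop ≠ 0)
    (ht : limsup (fun n => f n ^ (1 / ((c : ℝ) * n))) atTop < t) :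
    ∀ᶠ n in atTop, f n ≤ t ^ (c * n) := by
  have hbdd : IsBoundedUnder (· ≤ ·) atTop fun n => f n ^ (1 / ((c : ℝ) * n)) := by
    by_contra hb
    exact h₀ (Real.limsup_of_not_isBoundedUnder hb)
  filter_upwards [eventually_lt_of_limsup_lt ht hbdd, eventually_ne_atTop 0] with n hlt hn
  rw [one_div, ← Nat.cast_mul] at hlt
  calc f n = (f n ^ ((c * n : ℕ) : ℝ)⁻¹) ^ (c * n) :=
        (Real.rpow_inv_natCast_pow (hf n) (mul_ne_zero hc hn)).symm
    _ ≤ t ^ (c * n) := pow_le_pow_left₀ (Real.rpow_nonneg (hf n) _) hlt.le _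

lemma limsup_rpow_le_of_eventually_le (hf : ∀ n, 0 ≤ f n) (hc : c ≠ 0) {C m : ℝ} (hm : 0 ≤ m)
    (h : ∀ᶠ n in atTop, f n ≤ C * m ^ (c * n)) :
    limsup (fun n => f n ^ (1 / ((c : ℝ) * n))) atTop ≤ m := by
  refine le_of_forall_gt_imp_ge_of_dense fun m' hmm' => ?_
  have hcn : Tendsto (fun n => c * n) atTop atTop :=
    tendsto_id.const_mul_atTop' (Nat.pos_of_ne_zero hc)
  refine limsup_le_of_le (isCoboundedUnder_le_of_le atTop fun n => Real.rpow_nonneg (hf n) _) ?_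
  filter_upwards [h, hcn.eventually (eventually_mul_pow_le_pow hm hmm' C),
    eventually_ne_atTop 0] with n hle hdom hn
  rw [one_div, ← Nat.cast_mul]
  calc f n ^ ((c * n : ℕ) : ℝ)⁻¹ ≤ (m' ^ (c * n)) ^ ((c * n : ℕ) : ℝ)⁻¹ :=
        Real.rpow_le_rpow (hf n) (hle.trans hdom) (by positivity)
    _ = m' := Real.pow_rpow_inv_natCast (hm.trans hmm'.le) (mul_ne_zero hc hn)

end RootGrowth

lemma abs_le_of_abs_sub_le_geometric {u : ℕ → ℝ} (hu : Tendsto u atTop (𝓝 0)) {p N : ℕ}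
    {D m : ℝ} (hmp : m ^ p < 1) (h : ∀ j ≥ N, |u j - u (j + p)| ≤ D * m ^ j)
    (j : ℕ) (hj : N ≤ j) : |u j| ≤ D / (1 - m ^ p) * m ^ j := by
  have hp : p ≠ 0 := by rintro rfl; simp at hmp
  have hshift : Tendsto (fun k => j + p * k) atTop atTop :=
    tendsto_atTop_mono (fun _ => Nat.le_add_left _ _)
      (tendsto_id.const_mul_atTop' (Nat.pos_of_ne_zero hp))
  have hstep : ∀ k, dist (u (j + p * k)) (u (j + p * (k + 1))) ≤ D * m ^ j * (m ^ p) ^ k := by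
    intro k
    rw [Real.dist_eq, mul_add_one, ← add_assoc, mul_assoc, ← pow_mul, ← pow_add]
    exact h _ (hj.trans (Nat.le_add_right _ _))
  have := dist_le_of_le_geometric_of_tendsto₀ _ _ hmp hstep (hu.comp hshift)
  simpa [Real.dist_eq, div_mul_eq_mul_div, mul_right_comm] using this

lemma abs_mul_add_le_two_mul_sq {u v w x : ℝ} (hu : |u| ≤ x) (hv : |v| ≤ x) (hw : |w| ≤ x) :
    |v * (u + w)| ≤ 2 * x ^ 2 := by
  have hx : 0 ≤ x := (abs_nonneg _).trans hu
  calc |v * (u + w)| ≤ |v| * (|u| + |w|) := by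
        rw [abs_mul]; exact mul_le_mul_of_nonneg_left (abs_add_le _ _) (abs_nonneg _)
    _ ≤ x * (x + x) := by gcongr
    _ = 2 * x ^ 2 := by ring

lemma abs_sq_mul_mul_add_mul_le {u v w x : ℝ} (hx : x ≤ 1) (hu : |u| ≤ x) (hv : |v| ≤ x)
    (hw : |w| ≤ x) : |v ^ 2 * (1 - w) * (1 + u) + w * u| ≤ 5 * x ^ 2 := by
  have hx0 : 0 ≤ x := (abs_nonneg _).trans hu
  have h1w : |1 - w| ≤ 2 := (abs_sub _ _).trans (by rw [abs_one]; linarith)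
  have h1u : |1 + u| ≤ 2 := (abs_add_le _ _).trans (by rw [abs_one]; linarith)
  calc |v ^ 2 * (1 - w) * (1 + u) + w * u|
      ≤ |v| ^ 2 * |1 - w| * |1 + u| + |w| * |u| := by
        refine (abs_add_le _ _).trans ?_
        rw [abs_mul, abs_mul, abs_mul, abs_pow]
    _ ≤ x ^ 2 * 2 * 2 + x * x := by gcongr
    _ = 5 * x ^ 2 := by ring

structure StarRelated (α a b : ℕ → ℝ) : Prop where
  b_succ : ∀ n : ℕ, b (n + 1)
    = α (2 * n) - α (2 * n + 2) - α (2 * n + 1) * (α (2 * n) + α (2 * n + 2))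
  sq_sub_one : ∀ n : ℕ, (a (n + 1)) ^ 2 - 1
    = α (2 * n + 1) - α (2 * n + 3)
      - (α (2 * n + 2)) ^ 2 * (1 - α (2 * n + 3)) * (1 + α (2 * n + 1))
      - α (2 * n + 3) * α (2 * n + 1)

def starDefect (a b : ℕ → ℝ) (j : ℕ) : ℝ :=
  if Even j then b (j / 2 + 1) else a (j / 2 + 1) ^ 2 - 1

section StarDefect

variable {a b : ℕ → ℝ}

@[simp]
lemma starDefect_two_mul (n : ℕ) : starDefect a b (2 * n) = b (n + 1) := by
  simp [starDefect]

@[simp]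
lemma starDefect_two_mul_add_one (n : ℕ) : starDefect a b (2 * n + 1) = a (n + 1) ^ 2 - 1 := by
  simp [starDefect, Nat.mul_add_div]

lemma abs_starDefect_le (j : ℕ) :
    |starDefect a b j| ≤ |a (j / 2 + 1) ^ 2 - 1| + |b (j / 2 + 1)| := by
  unfold starDefect
  split_ifs
  · exact le_add_of_nonneg_left (abs_nonneg _)
  · exact le_add_of_nonneg_right (abs_nonneg _)

end StarDefect

namespace StarRelated

variable {α a b : ℕ → ℝ}

lemma abs_sub_sub_starDefect_le (h : StarRelated α a b) {j : ℕ} {x : ℝ} (hx : x ≤ 1)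
    (h₀ : |α j| ≤ x) (h₁ : |α (j + 1)| ≤ x) (h₂ : |α (j + 2)| ≤ x) :
    |α j - α (j + 2) - starDefect a b j| ≤ 5 * x ^ 2 := by
  obtain ⟨n, rfl | rfl⟩ := Nat.even_or_odd' j
  · rw [starDefect_two_mul, h.b_succ n, sub_sub_cancel]
    have hx0 : 0 ≤ x ^ 2 := sq_nonneg x
    linarith [abs_mul_add_le_two_mul_sq h₀ h₁ h₂]
  · rw [starDefect_two_mul_add_one, h.sq_sub_one n]
    calc _ = |α (2 * n + 2) ^ 2 * (1 - α (2 * n + 3)) * (1 + α (2 * n + 1))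
            + α (2 * n + 3) * α (2 * n + 1)| := by ring_nf
      _ ≤ 5 * x ^ 2 := abs_sq_mul_mul_add_mul_le hx h₀ h₁ h₂

lemma abs_starDefect_le_of_abs_le (h : StarRelated α a b) {j : ℕ} {x : ℝ} (hx : x ≤ 1)
    (h₀ : |α j| ≤ x) (h₁ : |α (j + 1)| ≤ x) (h₂ : |α (j + 2)| ≤ x) :
    |starDefect a b j| ≤ 7 * x := by
  have hx0 : 0 ≤ x := (abs_nonneg _).trans h₀
  have hq := h.abs_sub_sub_starDefect_le hx h₀ h₁ h₂
  have hsq : x ^ 2 ≤ x := by nlinarith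
  calc |starDefect a b j|
      = |(α j - α (j + 2)) - (α j - α (j + 2) - starDefect a b j)| := by ring_nf
    _ ≤ |α j| + |α (j + 2)| + 5 * x ^ 2 := (abs_sub _ _).trans (add_le_add (abs_sub _ _) hq)
    _ ≤ 7 * x := by linarith

lemma eventually_le_pow_of_abs_le_pow (h : StarRelated α a b) {t : ℝ} (ht₀ : 0 < t)
    (ht₁ : t ≤ 1) (hα : ∀ᶠ j in atTop, |α j| ≤ t ^ j) :
    ∀ᶠ n in atTop, |a n ^ 2 - 1| + |b n| ≤ 14 / t ^ 2 * t ^ (2 * n) := by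
  obtain ⟨N, hN⟩ := eventually_atTop.1 hα
  have hd : ∀ j ≥ N, |starDefect a b j| ≤ 7 * t ^ j := fun j hj =>
    h.abs_starDefect_le_of_abs_le (pow_le_one₀ ht₀.le ht₁) (hN j hj)
      ((hN _ (by omega)).trans (pow_le_pow_of_le_one ht₀.le ht₁ (by omega)))
      ((hN _ (by omega)).trans (pow_le_pow_of_le_one ht₀.le ht₁ (by omega)))
  filter_upwards [eventually_gt_atTop N] with n hn
  obtain ⟨k, rfl⟩ := Nat.exists_eq_add_of_lt hn
  have hodd := hd (2 * (N + k) + 1) (by omega)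
  have heven := hd (2 * (N + k)) (by omega)
  rw [starDefect_two_mul_add_one] at hodd
  rw [starDefect_two_mul] at heven
  have hmono : t ^ (2 * (N + k) + 1) ≤ t ^ (2 * (N + k)) :=
    pow_le_pow_of_le_one ht₀.le ht₁ (by omega)
  have hpow : 14 / t ^ 2 * t ^ (2 * (N + k + 1)) = 14 * t ^ (2 * (N + k)) := by
    rw [mul_add_one, pow_add]; field_simp
  rw [hpow]
  linarith

lemma eventually_abs_le_pow (h : StarRelated α a b) {s t m : ℝ} (hs : 0 ≤ s) (ht : 0 ≤ t)
    (hsm : s ≤ m) (htm : t ^ 2 ≤ m) (hm : m < 1) (hα : ∀ᶠ j in atTop, |α j| ≤ t ^ j)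
    (hab : ∀ᶠ n in atTop, |a n ^ 2 - 1| + |b n| ≤ s ^ (2 * n)) :
    ∀ᶠ j in atTop, |α j| ≤ 6 / (1 - m ^ 2) * m ^ j := by
  have ht₁ : t < 1 := by nlinarith
  have hlim : Tendsto α atTop (𝓝 0) :=
    squeeze_zero_norm' hα (tendsto_pow_atTop_nhds_zero_of_lt_one ht ht₁)
  obtain ⟨N, hN⟩ := eventually_atTop.1 (hα.and hab)
  have hstep : ∀ j ≥ 2 * N, |α j - α (j + 2)| ≤ 6 * m ^ j := by
    intro j hj
    have hαj : ∀ i, |α (j + i)| ≤ t ^ j := fun i =>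
      (hN _ (by omega)).1.trans (pow_le_pow_of_le_one ht ht₁.le (by omega))
    have hq := h.abs_sub_sub_starDefect_le (pow_le_one₀ ht ht₁.le)
      (by simpa using hαj 0) (hαj 1) (hαj 2)
    have hd : |starDefect a b j| ≤ m ^ j :=
      calc |starDefect a b j| ≤ s ^ (2 * (j / 2 + 1)) :=
            (abs_starDefect_le j).trans (hN _ (by omega)).2
        _ ≤ s ^ j := pow_le_pow_of_le_one hs (hsm.trans hm.le) (by omega)
        _ ≤ m ^ j := pow_le_pow_left₀ hs hsm j
    have hsq : (t ^ j) ^ 2 ≤ m ^ j := by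
      rw [← pow_mul, mul_comm, pow_mul]; exact pow_le_pow_left₀ (sq_nonneg t) htm j
    calc |α j - α (j + 2)| = |starDefect a b j + (α j - α (j + 2) - starDefect a b j)| := by
          ring_nf
      _ ≤ |starDefect a b j| + |α j - α (j + 2) - starDefect a b j| := abs_add_le _ _
      _ ≤ 6 * m ^ j := by linarith
  exact eventually_atTop.2 ⟨2 * N, abs_le_of_abs_sub_le_geometric hlim
    (pow_lt_one₀ (hs.trans hsm) hm two_ne_zero) hstep⟩

end StarRelated

/-- Let `(α n)` be a real sequence and `(a n)`, `(b n)` real sequences that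
are (*)-related, i.e. for all `n ≥ 0`:
`b_{n+1} = α_{2n} - α_{2n+2} - α_{2n+1}(α_{2n}+α_{2n+2})` and
`a_{n+1}² - 1 = α_{2n+1} - α_{2n+3} - α_{2n+2}²(1-α_{2n+3})(1+α_{2n+1}) - α_{2n+3}α_{2n+1}`.
Suppose `limsup |α n|^{1/n} = R₁⁻¹ < 1` and `limsup (|aₙ²-1| + |bₙ|)^{1/(2n)} = R₂⁻¹ < 1`.
Then `R₁ = R₂`. -/
theorem rate_of_decay_preserved
    (α a b : ℕ → ℝ)
    (hrel1 : ∀ n : ℕ, b (n + 1)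
      = α (2 * n) - α (2 * n + 2) - α (2 * n + 1) * (α (2 * n) + α (2 * n + 2)))
    (hrel2 : ∀ n : ℕ, (a (n + 1)) ^ 2 - 1
      = α (2 * n + 1) - α (2 * n + 3)
        - (α (2 * n + 2)) ^ 2 * (1 - α (2 * n + 3)) * (1 + α (2 * n + 1))
        - α (2 * n + 3) * α (2 * n + 1))
    (R₁ R₂ : ℝ) (hR₁ : 1 < R₁) (hR₂ : 1 < R₂)
    (h1 : limsup (fun n : ℕ => |α n| ^ (1 / (n : ℝ))) atTop = R₁⁻¹)
    (h2 : limsup (fun n : ℕ => (|(a n) ^ 2 - 1| + |b n|) ^ (1 / (2 * (n : ℝ)))) atTop = R₂⁻¹) :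
    R₁ = R₂ := by
  have hrel : StarRelated α a b := ⟨hrel1, hrel2⟩
  have hα₀ : ∀ n, 0 ≤ |α n| := fun n => abs_nonneg _
  have hab₀ : ∀ n, 0 ≤ |a n ^ 2 - 1| + |b n| := fun n => by positivity
  have h1' : limsup (fun n : ℕ => |α n| ^ (1 / (((1 : ℕ) : ℝ) * n))) atTop = R₁⁻¹ := by
    simpa using h1
  have h2' : limsup (fun n : ℕ => (|a n ^ 2 - 1| + |b n|) ^ (1 / (((2 : ℕ) : ℝ) * n))) atTop
      = R₂⁻¹ := by
    simpa using h2
  have hr₁ : 0 < R₁⁻¹ := by positivity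
  have hr₂ : 0 < R₂⁻¹ := by positivity
  have hα : ∀ t, R₁⁻¹ < t → ∀ᶠ j in atTop, |α j| ≤ t ^ j := fun t ht => by
    simpa using eventually_le_pow_of_limsup_rpow_lt hα₀ one_ne_zero (h1' ▸ hr₁.ne') (h1' ▸ ht)
  suffices R₁⁻¹ = R₂⁻¹ from inv_injective this
  refine le_antisymm (not_lt.1 fun hlt => ?_) (not_lt.1 fun hlt => ?_)
  · obtain ⟨s, hs₂, hs₁⟩ := exists_between hlt
    obtain ⟨t, ht₁, ht⟩ := exists_between ((Real.lt_sqrt hr₁.le).2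
      (by nlinarith [inv_lt_one_of_one_lt₀ hR₁]) : R₁⁻¹ < √R₁⁻¹)
    have hm : max s (t ^ 2) < R₁⁻¹ := max_lt hs₁ ((Real.lt_sqrt (hr₁.trans ht₁).le).1 ht)
    have hab := eventually_le_pow_of_limsup_rpow_lt hab₀ two_ne_zero (h2' ▸ hr₂.ne') (h2' ▸ hs₂)
    have hbound := hrel.eventually_abs_le_pow (hr₂.trans hs₂).le (hr₁.trans ht₁).le
      (le_max_left s (t ^ 2)) (le_max_right s (t ^ 2)) (hm.trans (inv_lt_one_of_one_lt₀ hR₁))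
      (hα t ht₁) hab
    have := limsup_rpow_le_of_eventually_le (m := max s (t ^ 2)) hα₀ one_ne_zero (by positivity)
      (by simpa only [one_mul] using hbound)
    exact hm.not_ge (h1' ▸ this)
  · obtain ⟨t, ht₁, ht₂⟩ := exists_between hlt
    have := limsup_rpow_le_of_eventually_le hab₀ two_ne_zero (hr₁.trans ht₁).le
      (hrel.eventually_le_pow_of_abs_le_pow (hr₁.trans ht₁)
        (ht₂.trans (inv_lt_one_of_one_lt₀ hR₂)).le (hα t ht₁))
    exact ht₂.not_ge (h2' ▸ this)
end

section
/- Let (u,M) be a Jost pair and let z_0 with |z_0|>1 be a pole of u such that u(1/z_0)=0. Then the product u\cdot M has a pole at z_0 (indeed a pole of order at least two). -/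
/-! Solving the functional equation for `M z` gives, near `z₀`,
`u z * M z = (z - z⁻¹) / u z⁻¹ + u z * M z⁻¹`. Since `z₀⁻¹` lies in the unit disk, `u` has a
simple zero and `M` a simple pole there, so the first term has order `≥ -1` at `z₀` while the
second has order `ord u z₀ - 1 ≤ -2`; hence the sum has order `ord u z₀ - 1`. -/

open Filter Topology Complex

/-- `f` has a pole at `z`: it is meromorphic at `z` with negative order. -/
def IsPoleAt (f : ℂ → ℂ) (z : ℂ) : Prop :=
  ∃ h : MeromorphicAt f z, meromorphicOrderAt f z < 0

/-- A *Jost pair* `(u, M)`: `u` and `M` are meromorphic on `ℂ \ {0}`, real on `ℝ`,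
`u` has neither zeros nor poles on the unit circle, every zero of `u` in the open unit
disk is real and simple, every pole of `M` in the open unit disk is real and simple,
the zeros of `u` in the disk coincide exactly with the poles of `M` in the disk, and
`(M(z) - M(1/z)) u(1/z) u(z) = z - z⁻¹` as an identity of meromorphic functions on
`ℂ \ {0}` (i.e. pointwise wherever all functions involved are analytic). -/
structure IsJostPair (u M : ℂ → ℂ) : Prop where
  mero_u : ∀ z : ℂ, z ≠ 0 → MeromorphicAt u z
  mero_M : ∀ z : ℂ, z ≠ 0 → MeromorphicAt M z
  real_u : ∀ z : ℂ, z ≠ 0 → AnalyticAt ℂ u z → AnalyticAt ℂ u (starRingEnd ℂ z) →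
    starRingEnd ℂ (u (starRingEnd ℂ z)) = u z
  real_M : ∀ z : ℂ, z ≠ 0 → AnalyticAt ℂ M z → AnalyticAt ℂ M (starRingEnd ℂ z) →
    starRingEnd ℂ (M (starRingEnd ℂ z)) = M z
  circle_u : ∀ z : ℂ, ‖z‖ = 1 → AnalyticAt ℂ u z ∧ u z ≠ 0
  zeros_u_real_simple : ∀ z : ℂ, z ≠ 0 → ‖z‖ < 1 →
    AnalyticAt ℂ u z → u z = 0 → z.im = 0 ∧ deriv u z ≠ 0
  poles_M_real_simple : ∀ z : ℂ, z ≠ 0 → ‖z‖ < 1 → IsPoleAt M z →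
    z.im = 0 ∧ ∃ h : MeromorphicAt M z, meromorphicOrderAt M z = (-1 : ℤ)
  zeros_eq_poles : ∀ z : ℂ, z ≠ 0 → ‖z‖ < 1 →
    ((AnalyticAt ℂ u z ∧ u z = 0) ↔ IsPoleAt M z)
  func_eq : ∀ z : ℂ, z ≠ 0 → AnalyticAt ℂ u z → AnalyticAt ℂ u z⁻¹ →
    AnalyticAt ℂ M z → AnalyticAt ℂ M z⁻¹ →
    (M z - M z⁻¹) * u z⁻¹ * u z = z - z⁻¹

/-- `z₀` is a *noncanonical zero* of the Jost pair `(u, M)`: a zero of `u` in the open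
unit disk such that `1/z₀` is not a pole of `u` and
`lim_{z → z₀} (z - z₀) M(z) ≠ -(z₀ - z₀⁻¹) [u'(z₀) u(1/z₀)]⁻¹`, this inequality being
deemed to hold when `u(1/z₀) = 0`. -/
def IsNoncanonicalZero (u M : ℂ → ℂ) (z₀ : ℂ) : Prop :=
  z₀ ≠ 0 ∧ ‖z₀‖ < 1 ∧ AnalyticAt ℂ u z₀ ∧ u z₀ = 0 ∧
    ¬ IsPoleAt u z₀⁻¹ ∧
    (u z₀⁻¹ = 0 ∨
      ¬ Tendsto (fun z => (z - z₀) * M z) (𝓝[≠] z₀)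
          (𝓝 (-(z₀ - z₀⁻¹) * (deriv u z₀ * u z₀⁻¹)⁻¹)))

/-- `P₂(u,M)`: the set of inverses of noncanonical zeros of `(u, M)`. -/
def P2 (u M : ℂ → ℂ) : Set ℂ :=
  {w | ∃ z₀ : ℂ, IsNoncanonicalZero u M z₀ ∧ w = z₀⁻¹}

/-- `P₁(u)`: the set of poles of `u` in `{|z| > 1}`. -/
def P1 (u : ℂ → ℂ) : Set ℂ :=
  {z | 1 < ‖z‖ ∧ IsPoleAt u z}

section Inversion

variable {𝕜 : Type*} [NontriviallyNormedField 𝕜] {x : 𝕜}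

lemma tendsto_inv₀_nhdsNE (hx : x ≠ 0) : Tendsto (·⁻¹) (𝓝[≠] x) (𝓝[≠] x⁻¹) :=
  tendsto_nhdsWithin_of_tendsto_nhds_of_eventually_within _
    ((continuousAt_inv₀ hx).tendsto.mono_left nhdsWithin_le_nhds)
    (eventually_nhdsWithin_of_forall fun _ hy => inv_injective.ne hy)

lemma meromorphicOrderAt_comp_inv [CompleteSpace 𝕜] [CharZero 𝕜] {E : Type*}
    [NormedAddCommGroup E] [NormedSpace 𝕜 E] {f : 𝕜 → E} (hx : x ≠ 0) :
    meromorphicOrderAt (fun z => f z⁻¹) x = meromorphicOrderAt f x⁻¹ :=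
  meromorphicOrderAt_comp_of_deriv_ne_zero (g := (·⁻¹)) (analyticAt_inv hx) (by simp [hx])

end Inversion

lemma mul_eq_of_functional_eq {u₁ u₂ m₁ m₂ c : ℂ} (hu₁ : u₁ ≠ 0) (hu₂ : u₂ ≠ 0)
    (h : (m₁ - m₂) * u₂ * u₁ = c) : u₁ * m₁ = c * u₂⁻¹ + u₁ * m₂ := by
  rw [← h]; field_simp; ring

namespace IsJostPair

variable {u M : ℂ → ℂ} {x : ℂ}

lemma mul_eventuallyEq_nhdsNE (h : IsJostPair u M) (hx : x ≠ 0) (hu : meromorphicOrderAt u x ≠ ⊤)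
    (hu' : meromorphicOrderAt u x⁻¹ ≠ ⊤) :
    (fun z => u z * M z) =ᶠ[𝓝[≠] x] fun z => (z - z⁻¹) * (u z⁻¹)⁻¹ + u z * M z⁻¹ := by
  have hinv := tendsto_inv₀_nhdsNE hx
  have hx' : x⁻¹ ≠ 0 := inv_ne_zero hx
  filter_upwards [(h.mero_u x hx).eventually_analyticAt, (h.mero_M x hx).eventually_analyticAt,
    hinv.eventually (h.mero_u _ hx').eventually_analyticAt,
    hinv.eventually (h.mero_M _ hx').eventually_analyticAt,
    (meromorphicOrderAt_ne_top_iff_eventually_ne_zero (h.mero_u x hx)).1 hu,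
    hinv.eventually ((meromorphicOrderAt_ne_top_iff_eventually_ne_zero (h.mero_u _ hx')).1 hu'),
    (eventually_ne_nhds hx).filter_mono nhdsWithin_le_nhds]
    with z huz hMz huz' hMz' hu0 hu0' hz0
  exact mul_eq_of_functional_eq hu0 hu0' (h.func_eq z hz0 huz huz' hMz hMz')

lemma meromorphicOrderAt_u_eq_one_of_zero (h : IsJostPair u M) (hx : x ≠ 0) (hx1 : ‖x‖ < 1)
    (hu : AnalyticAt ℂ u x) (hu0 : u x = 0) : meromorphicOrderAt u x = 1 := by
  rw [hu.meromorphicOrderAt_eq,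
    hu.analyticOrderAt_eq_one_of_zero_deriv_ne_zero hu0 (h.zeros_u_real_simple x hx hx1 hu hu0).2]
  rfl

lemma meromorphicOrderAt_M_eq_neg_one_of_zero (h : IsJostPair u M) (hx : x ≠ 0) (hx1 : ‖x‖ < 1)
    (hu : AnalyticAt ℂ u x) (hu0 : u x = 0) : meromorphicOrderAt M x = -1 :=
  (h.poles_M_real_simple x hx hx1 ((h.zeros_eq_poles x hx hx1).1 ⟨hu, hu0⟩)).2.2

lemma meromorphicOrderAt_mul_of_inv_zero (h : IsJostPair u M) (hx : 1 < ‖x‖) {a : ℤ}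
    (ha : meromorphicOrderAt u x = a) (ha0 : a < 0) (hu : AnalyticAt ℂ u x⁻¹) (hu0 : u x⁻¹ = 0) :
    meromorphicOrderAt (fun z => u z * M z) x = ↑(a - 1) := by
  have hx0 : x ≠ 0 := norm_pos_iff.1 (one_pos.trans hx)
  have hw : ‖x⁻¹‖ < 1 := by rw [norm_inv]; exact inv_lt_one_of_one_lt₀ hx
  have hinv : AnalyticAt ℂ (·⁻¹) x := analyticAt_inv hx0
  have huinv : MeromorphicAt (fun z => u z⁻¹) x := hu.meromorphicAt.comp_analyticAt hinv
  have hMinv : MeromorphicAt (fun z => M z⁻¹) x :=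
    (h.mero_M _ (inv_ne_zero hx0)).comp_analyticAt hinv
  have hsub : AnalyticAt ℂ (fun z => z - z⁻¹) x := analyticAt_id.sub hinv
  have hpolar : MeromorphicAt (fun z => (z - z⁻¹) * (u z⁻¹)⁻¹) x :=
    hsub.meromorphicAt.fun_mul huinv.fun_inv
  have hu1 := h.meromorphicOrderAt_u_eq_one_of_zero (inv_ne_zero hx0) hw hu hu0
  have hmain : meromorphicOrderAt (fun z => u z * M z⁻¹) x = ↑(a - 1) := by
    rw [fun_meromorphicOrderAt_mul (h.mero_u x hx0) hMinv, meromorphicOrderAt_comp_inv hx0,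
      h.meromorphicOrderAt_M_eq_neg_one_of_zero (inv_ne_zero hx0) hw hu hu0, ha]
    rfl
  have hpolar_ge : (-1 : ℤ) ≤ meromorphicOrderAt (fun z => (z - z⁻¹) * (u z⁻¹)⁻¹) x := by
    rw [fun_meromorphicOrderAt_mul hsub.meromorphicAt huinv.fun_inv, fun_meromorphicOrderAt_inv,
      meromorphicOrderAt_comp_inv hx0, hu1]
    exact le_add_of_nonneg_left hsub.meromorphicOrderAt_nonneg
  rw [meromorphicOrderAt_congr (h.mul_eventuallyEq_nhdsNE hx0 (by simp [ha]) (by simp [hu1])),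
    ← Pi.add_def, meromorphicOrderAt_add_eq_right_of_lt hpolar, hmain]
  exact hmain ▸ lt_of_lt_of_le (by exact_mod_cast (by omega : a - 1 < -1)) hpolar_ge

end IsJostPair

/-- Let `(u, M)` be a Jost pair and `z₀` with `|z₀| > 1` a pole of `u`
such that `u(1/z₀) = 0` (a zero of `u`).  Then `u · M` has a pole at `z₀`, indeed a pole
of order at least two. -/
theorem pole_of_uM_at_pole_of_u_with_inverse_zero
    (u M : ℂ → ℂ) (h : IsJostPair u M) (z₀ : ℂ) (hz₀ : 1 < ‖z₀‖)
    (hpole : IsPoleAt u z₀)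
    (hzero : AnalyticAt ℂ u z₀⁻¹ ∧ u z₀⁻¹ = 0) :
    IsPoleAt (fun z => u z * M z) z₀ ∧
      ∃ hm : MeromorphicAt (fun z => u z * M z) z₀, meromorphicOrderAt (fun z => u z * M z) z₀ ≤ (-2 : ℤ) := by
  obtain ⟨hu, hneg⟩ := hpole
  obtain ⟨a, ha⟩ := WithTop.ne_top_iff_exists.1 hneg.ne_top
  have ha0 : a < 0 := by rw [← ha] at hneg; exact_mod_cast hneg
  have horder := h.meromorphicOrderAt_mul_of_inv_zero hz₀ ha.symm ha0 hzero.1 hzero.2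
  have hmero : MeromorphicAt (fun z => u z * M z) z₀ :=
    hu.mul (h.mero_M z₀ (norm_pos_iff.1 (one_pos.trans hz₀)))
  refine ⟨⟨hmero, ?_⟩, hmero, ?_⟩ <;> rw [horder] <;> norm_cast <;> omega
end
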